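/- Let d ≥ 2 be a natural number, c > 0, c' > 0, σ > 0 reals, and define f, g ∈ EuclideanSpace ℝ (Fin d) by f 0 = c'·(d−1)·Real.sqrt (1/(d·(d−1))), f j = −c'·Real.sqrt (1/(d·(d−1))) for j ≠ 0, and g 0 = c·(d−1)·Real.sqrt (1/(d·(d−1))), g j = −c·Real.sqrt (1/(d·(d−1))) for j ≠ 0. Consider the family of d coordinate permutations π j = Equiv.swap 0 j for j : Fin d (for j = 0 this is the identity), and define ζ₁ = −Real.log (∑ j : Fin d, Real.exp (⟪f, g ∘ π j⟫ / σ²)) + ⟪f, g⟫/σ² and ζ₂ = −Real.log (∑ j : Fin d, Real.exp (⟪f + g, g ∘ π j⟫ / σ²)) + ⟪f, g⟫/σ². Then ζ₁ = −Real.log (1 + (d−1)·Real.exp (−d·c·c' / ((d−1)·σ²))) and ζ₂ = −Real.log (1 + (d−1)·Real.exp (−d·c·(c+c') / ((d−1)·σ²))) − c²/σ². -/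

import Mathlib

/-!
With `s = √(1/(d(d-1)))`, both vectors are multiples of `e = (d-1, -1, …, -1) • s`, a unit vector
with `⟪e, e ∘ swap 0 j⟫ = -1/(d-1)` for `j ≠ 0`. Hence each sum over `j` has the form
`exp x + (d-1) exp y`, and pulling `exp x` out of the logarithm cancels the `⟪f, g⟫ / σ²` term
(for `ζ₂` after writing `⟪f, g⟫ = ⟪f + g, g⟫ - ‖g‖²`).
-/

open RealInnerProductSpace

def permVec {d : ℕ} (π : Equiv.Perm (Fin d)) (w : EuclideanSpace ℝ (Fin d)) :
    EuclideanSpace ℝ (Fin d) :=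
  WithLp.toLp 2 (fun j => w (π j))

section PermVec

variable {d : ℕ}

@[simp]
theorem permVec_apply (π : Equiv.Perm (Fin d)) (w : EuclideanSpace ℝ (Fin d)) (i : Fin d) :
    permVec π w i = w (π i) :=
  rfl

@[simp]
theorem permVec_refl (w : EuclideanSpace ℝ (Fin d)) : permVec (Equiv.refl _) w = w :=
  rfl

theorem permVec_smul (π : Equiv.Perm (Fin d)) (a : ℝ) (w : EuclideanSpace ℝ (Fin d)) :
    permVec π (a • w) = a • permVec π w :=
  rfl

end PermVec

theorem Fintype.sum_ite_eq_add_card_sub_one_mul {ι : Type*} [Fintype ι] [DecidableEq ι]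
    (i₀ : ι) (x y : ℝ) :
    ∑ j, (if j = i₀ then x else y) = x + ((Fintype.card ι : ℝ) - 1) * y := by
  rw [Fintype.sum_eq_add_sum_compl i₀, if_pos rfl,
    Finset.sum_congr rfl fun j hj => if_neg (by simpa using hj),
    Finset.sum_const, Finset.card_compl, Finset.card_singleton, nsmul_eq_mul,
    Nat.cast_sub (Fintype.card_pos_iff.mpr ⟨i₀⟩)]
  push_cast
  ring

theorem neg_log_sum_exp_ite_add {ι : Type*} [Fintype ι] [DecidableEq ι] (i₀ : ι) (x y : ℝ) :
    -Real.log (∑ j, Real.exp (if j = i₀ then x else y)) + x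
      = -Real.log (1 + ((Fintype.card ι : ℝ) - 1) * Real.exp (y - x)) := by
  have hcard : (1 : ℝ) ≤ Fintype.card ι := by exact_mod_cast Fintype.card_pos_iff.mpr ⟨i₀⟩
  have hsum : ∑ j, Real.exp (if j = i₀ then x else y)
      = Real.exp x * (1 + ((Fintype.card ι : ℝ) - 1) * Real.exp (y - x)) := by
    simp only [apply_ite Real.exp, Fintype.sum_ite_eq_add_card_sub_one_mul, Real.exp_sub]
    field_simp
  have hpos : 0 < 1 + ((Fintype.card ι : ℝ) - 1) * Real.exp (y - x) := by positivity
  rw [hsum, Real.log_mul (Real.exp_ne_zero x) hpos.ne', Real.log_exp]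
  ring

section WorstCase

variable {d : ℕ} [NeZero d]

noncomputable def spikeVec (d : ℕ) [NeZero d] (a b : ℝ) : EuclideanSpace ℝ (Fin d) :=
  WithLp.toLp 2 (fun i => if i = 0 then a else b)

@[simp]
theorem spikeVec_apply (a b : ℝ) (i : Fin d) :
    spikeVec d a b i = if i = 0 then a else b :=
  rfl

theorem inner_spikeVec_permVec_swap (a b : ℝ) (j : Fin d) :
    ⟪spikeVec d a b, permVec (Equiv.swap 0 j) (spikeVec d a b)⟫
      = if j = 0 then a ^ 2 + ((d : ℝ) - 1) * b ^ 2
        else 2 * a * b + ((d : ℝ) - 2) * b ^ 2 := by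
  rw [PiLp.inner_apply]
  simp only [permVec_apply, spikeVec_apply, RCLike.inner_apply, conj_trivial]
  rcases eq_or_ne j 0 with rfl | hj
  · have hterm : ∀ i : Fin d, (if Equiv.swap 0 0 i = 0 then a else b) * (if i = 0 then a else b)
        = if i = 0 then a ^ 2 else b ^ 2 := by
      intro i; rw [Equiv.swap_self, Equiv.refl_apply]; split_ifs <;> ring
    simp only [hterm, Fintype.sum_ite_eq_add_card_sub_one_mul, Fintype.card_fin, if_true]
  · have hterm : ∀ i : Fin d, (if Equiv.swap 0 j i = 0 then a else b) * (if i = 0 then a else b)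
        = b ^ 2 + ((if i = 0 then a * b - b ^ 2 else 0) + if i = j then a * b - b ^ 2 else 0) := by
      intro i
      rcases eq_or_ne i 0 with rfl | hi
      · simp [hj, hj.symm, mul_comm]
      rcases eq_or_ne i j with rfl | hij
      · simp [hi]
      · simp [Equiv.swap_apply_of_ne_of_ne hi hij, hi, hij, sq]
    simp only [hterm, Finset.sum_add_distrib, Finset.sum_const, Finset.card_univ,
      Fintype.card_fin, nsmul_eq_mul, Finset.sum_ite_eq', Finset.mem_univ, if_true, if_neg hj]
    ring

noncomputable def worstCaseVec (d : ℕ) [NeZero d] : EuclideanSpace ℝ (Fin d) :=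
  spikeVec d (((d : ℝ) - 1) * √(1 / ((d : ℝ) * ((d : ℝ) - 1))))
    (-√(1 / ((d : ℝ) * ((d : ℝ) - 1))))

theorem eq_smul_worstCaseVec {a : ℝ} {u : EuclideanSpace ℝ (Fin d)}
    (hu0 : u 0 = a * ((d : ℝ) - 1) * √(1 / ((d : ℝ) * ((d : ℝ) - 1))))
    (huj : ∀ j : Fin d, j ≠ 0 → u j = -a * √(1 / ((d : ℝ) * ((d : ℝ) - 1)))) :
    u = a • worstCaseVec d := by
  ext i
  rcases eq_or_ne i 0 with rfl | hi
  · simp [worstCaseVec, hu0, mul_assoc]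
  · simp [worstCaseVec, huj i hi, hi]

theorem inner_worstCaseVec_permVec_swap (hd : 2 ≤ d) (j : Fin d) :
    ⟪worstCaseVec d, permVec (Equiv.swap 0 j) (worstCaseVec d)⟫
      = if j = 0 then 1 else -1 / ((d : ℝ) - 1) := by
  have hd1 : (1 : ℝ) < d := by exact_mod_cast hd
  have hs : (d : ℝ) * ((d : ℝ) - 1) * √(1 / ((d : ℝ) * ((d : ℝ) - 1))) ^ 2 = 1 := by
    rw [Real.sq_sqrt (by positivity), mul_one_div_cancel (by positivity)]
  rw [worstCaseVec, inner_spikeVec_permVec_swap]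
  split_ifs
  · linear_combination hs
  · rw [eq_div_iff (by linarith)]
    linear_combination -hs

theorem inner_smul_worstCaseVec_permVec_swap (hd : 2 ≤ d) (a b : ℝ) (j : Fin d) :
    ⟪a • worstCaseVec d, permVec (Equiv.swap 0 j) (b • worstCaseVec d)⟫
      = if j = 0 then a * b else -(a * b) / ((d : ℝ) - 1) := by
  rw [permVec_smul, real_inner_smul_left, real_inner_smul_right,
    inner_worstCaseVec_permVec_swap hd]
  split_ifs <;> ring

theorem inner_smul_worstCaseVec (hd : 2 ≤ d) (a b : ℝ) :
    ⟪a • worstCaseVec d, b • worstCaseVec d⟫ = a * b := by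
  simpa using inner_smul_worstCaseVec_permVec_swap hd a b 0

theorem neg_log_sum_exp_inner_smul_worstCaseVec (hd : 2 ≤ d) (a b σ : ℝ) :
    -Real.log (∑ j : Fin d,
        Real.exp (⟪a • worstCaseVec d, permVec (Equiv.swap 0 j) (b • worstCaseVec d)⟫ / σ ^ 2))
        + a * b / σ ^ 2
      = -Real.log (1 + ((d : ℝ) - 1) * Real.exp (-(d : ℝ) * a * b / (((d : ℝ) - 1) * σ ^ 2))) := by
  have hd1 : (d : ℝ) - 1 ≠ 0 := by
    have : (2 : ℝ) ≤ d := by exact_mod_cast hd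
    linarith
  simp_rw [inner_smul_worstCaseVec_permVec_swap hd, ite_div]
  rw [neg_log_sum_exp_ite_add, Fintype.card_fin, div_div,
    ← mul_div_mul_left (a * b) (σ ^ 2) hd1, ← sub_div]
  ring_nf

end WorstCase

theorem zeta_closed_forms_general {d : ℕ} [NeZero d] (hd : 2 ≤ d) {c c' σ : ℝ}
    (f g : EuclideanSpace ℝ (Fin d))
    (hf0 : f 0 = c' * ((d : ℝ) - 1) * Real.sqrt (1 / ((d : ℝ) * ((d : ℝ) - 1))))
    (hfj : ∀ j : Fin d, j ≠ 0 → f j = -c' * Real.sqrt (1 / ((d : ℝ) * ((d : ℝ) - 1))))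
    (hg0 : g 0 = c * ((d : ℝ) - 1) * Real.sqrt (1 / ((d : ℝ) * ((d : ℝ) - 1))))
    (hgj : ∀ j : Fin d, j ≠ 0 → g j = -c * Real.sqrt (1 / ((d : ℝ) * ((d : ℝ) - 1)))) :
    (-Real.log (∑ j : Fin d, Real.exp (⟪f, permVec (Equiv.swap 0 j) g⟫ / σ ^ 2))
        + ⟪f, g⟫ / σ ^ 2
      = -Real.log (1 + ((d : ℝ) - 1) *
          Real.exp (-(d : ℝ) * c * c' / (((d : ℝ) - 1) * σ ^ 2)))) ∧
    (-Real.log (∑ j : Fin d, Real.exp (⟪f + g, permVec (Equiv.swap 0 j) g⟫ / σ ^ 2))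
        + ⟪f, g⟫ / σ ^ 2
      = -Real.log (1 + ((d : ℝ) - 1) *
          Real.exp (-(d : ℝ) * c * (c + c') / (((d : ℝ) - 1) * σ ^ 2))) - c ^ 2 / σ ^ 2) := by
  have hf := eq_smul_worstCaseVec hf0 hfj
  have hg := eq_smul_worstCaseVec hg0 hgj
  have hfg : f + g = (c' + c) • worstCaseVec d := by rw [hf, hg, add_smul]
  constructor
  · rw [hf, hg, inner_smul_worstCaseVec hd, neg_log_sum_exp_inner_smul_worstCaseVec hd]
    ring_nf
  · have hsplit : c' * c / σ ^ 2 = (c' + c) * c / σ ^ 2 - c ^ 2 / σ ^ 2 := by ring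
    rw [hfg, hf, hg, inner_smul_worstCaseVec hd, hsplit, ← add_sub_assoc,
      neg_log_sum_exp_inner_smul_worstCaseVec hd]
    ring_nf

/-- **Closed forms of `ζ₁` and `ζ₂` at the worst case.** With the worst-case vectors `f, g` and
the family of transpositions `π j = swap 0 j`, the quantities `ζ₁, ζ₂` of the paper's Lemma 2
take the closed forms appearing in Theorem 3. -/
theorem zeta_closed_forms {d : ℕ} [NeZero d] (hd : 2 ≤ d) {c c' σ : ℝ}
    (hc : 0 < c) (hc' : 0 < c') (hσ : 0 < σ) (f g : EuclideanSpace ℝ (Fin d))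
    (hf0 : f 0 = c' * ((d : ℝ) - 1) * Real.sqrt (1 / ((d : ℝ) * ((d : ℝ) - 1))))
    (hfj : ∀ j : Fin d, j ≠ 0 → f j = -c' * Real.sqrt (1 / ((d : ℝ) * ((d : ℝ) - 1))))
    (hg0 : g 0 = c * ((d : ℝ) - 1) * Real.sqrt (1 / ((d : ℝ) * ((d : ℝ) - 1))))
    (hgj : ∀ j : Fin d, j ≠ 0 → g j = -c * Real.sqrt (1 / ((d : ℝ) * ((d : ℝ) - 1)))) :
    (-Real.log (∑ j : Fin d, Real.exp (⟪f, permVec (Equiv.swap 0 j) g⟫ / σ ^ 2))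
        + ⟪f, g⟫ / σ ^ 2
      = -Real.log (1 + ((d : ℝ) - 1) *
          Real.exp (-(d : ℝ) * c * c' / (((d : ℝ) - 1) * σ ^ 2)))) ∧
    (-Real.log (∑ j : Fin d, Real.exp (⟪f + g, permVec (Equiv.swap 0 j) g⟫ / σ ^ 2))
        + ⟪f, g⟫ / σ ^ 2
      = -Real.log (1 + ((d : ℝ) - 1) *
          Real.exp (-(d : ℝ) * c * (c + c') / (((d : ℝ) - 1) * σ ^ 2))) - c ^ 2 / σ ^ 2) :=
  zeta_closed_forms_general hd f g hf0 hfj hg0 hgj
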